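/- Let g > 2 be an integer and let W be the group with presentation ⟨A, B, C | A² = B^{4g} = C⁴ = ABC = C²B^{2g} = 1⟩. Then the element C²A of W has order 2. -/

import Mathlib

/-- Relators of the Wiman type II group
⟨A, B, C | A² = B^{4g} = C⁴ = ABC = C²B^{2g} = 1⟩, with generators
A, B, C represented by `FreeGroup.of 0`, `FreeGroup.of 1`, `FreeGroup.of 2`. -/
def wimanRels (g : ℕ) : Set (FreeGroup (Fin 3)) :=
  {FreeGroup.of 0 ^ 2, FreeGroup.of 1 ^ (4 * g), FreeGroup.of 2 ^ 4,
   FreeGroup.of 0 * FreeGroup.of 1 * FreeGroup.of 2,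
   FreeGroup.of 2 ^ 2 * FreeGroup.of 1 ^ (2 * g)}


/-!
Since `ABC = 1` we have `C⁻¹ = AB`, and `C²B^{2g} = 1` gives `C² = B^{-2g}`. Hence `C²`
commutes with `AB` and with `B`, so with `A`, and `(C²A)² = C⁴A² = 1`. The homomorphism onto
`{±1}` sending `A, C ↦ -1` and `B ↦ 1` shows `C²A ≠ 1`.
-/

theorem commute_sq_of_mul_mul_eq_one {G : Type*} [Group G] {a b c : G} {n : ℕ}
    (habc : a * b * c = 1) (hcb : c ^ 2 * b ^ n = 1) : Commute (c ^ 2) a := by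
  have hab : a * b = c⁻¹ := eq_inv_of_mul_eq_one_left habc
  have hc2 : c ^ 2 = (b ^ n)⁻¹ := eq_inv_of_mul_eq_one_left hcb
  have with_ab : Commute (c ^ 2) (a * b) := hab ▸ (Commute.self_pow c 2).symm.inv_right
  have with_b : Commute (c ^ 2) b := hc2 ▸ (Commute.self_pow b n).symm.inv_left
  simpa using with_ab.mul_right with_b.inv_right

theorem sq_mul_sq_eq_one {G : Type*} [Group G] {a b c : G} {n : ℕ}
    (ha : a ^ 2 = 1) (hc : c ^ 4 = 1) (habc : a * b * c = 1) (hcb : c ^ 2 * b ^ n = 1) :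
    (c ^ 2 * a) ^ 2 = 1 := by
  rw [(commute_sq_of_mul_mul_eq_one habc hcb).mul_pow, ← pow_mul, hc, ha, one_mul]

namespace Wiman

variable (g : ℕ)

def mirror : PresentedGroup (wimanRels g) :=
  .of 2 ^ 2 * .of 0

theorem mirror_sq : mirror g ^ 2 = 1 := by
  have rel {r} (hr : r ∈ wimanRels g) : PresentedGroup.mk (wimanRels g) r = 1 :=
    PresentedGroup.one_of_mem hr
  have ha := rel (r := .of 0 ^ 2) (by simp [wimanRels])
  have hc := rel (r := .of 2 ^ 4) (by simp [wimanRels])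
  have habc := rel (r := .of 0 * .of 1 * .of 2) (by simp [wimanRels])
  have hcb := rel (r := .of 2 ^ 2 * .of 1 ^ (2 * g)) (by simp [wimanRels])
  simp only [map_mul, map_pow] at ha hc habc hcb
  exact sq_mul_sq_eq_one ha hc habc hcb

def sign : PresentedGroup (wimanRels g) →* ℤˣ :=
  PresentedGroup.toGroup (f := ![-1, 1, -1]) (by simp [wimanRels]; decide)

theorem mirror_ne_one : mirror g ≠ 1 := by
  intro h
  have := congrArg (sign g) h
  simp [mirror, sign, PresentedGroup.toGroup.of] at this

end Wiman

theorem stmt_10_general (g : ℕ)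
    (A C : PresentedGroup (wimanRels g))
    (hA : A = PresentedGroup.of 0) (hC : C = PresentedGroup.of 2) :
    orderOf (C ^ 2 * A) = 2 := by
  subst hA hC
  exact orderOf_eq_prime (Wiman.mirror_sq g) (Wiman.mirror_ne_one g)

theorem stmt_10 (g : ℕ) (hg : 2 < g)
    (A C : PresentedGroup (wimanRels g))
    (hA : A = PresentedGroup.of 0) (hC : C = PresentedGroup.of 2) :
    orderOf (C ^ 2 * A) = 2 :=
  stmt_10_general g A C hA hC
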